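/- arXiv:1601.01456 — 6 statements merged into one kernel-verified Lean document; each statement's English description precedes it below -/
import Mathlib

section
/- For any simple hypergraph H, the semi induced matching number satisfies c'_H ≤ dim(Δ_H) + 1; that is, for any semi induced matching {E_1,…,E_k} of H, there exists an independent set of H of cardinality at least |⋃_{ℓ=1}^k E_ℓ| − k. -/
/-- A finite set `M` of edges of a hypergraph with edge set `Es` is a *semi induced
matching* if `M ⊆ Es` and the only edges of `Es` contained in `⋃ M` are the members
of `M`. -/
def SemiInducedMatching {α : Type*} [DecidableEq α]
    (Es : Set (Finset α)) (M : Finset (Finset α)) : Prop :=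
  ↑M ⊆ Es ∧ ∀ e ∈ Es, e ⊆ M.sup id → e ∈ M

/-- An *induced matching* is a semi induced matching whose edges are pairwise disjoint. -/
def InducedMatching {α : Type*} [DecidableEq α]
    (Es : Set (Finset α)) (M : Finset (Finset α)) : Prop :=
  SemiInducedMatching Es M ∧ (M : Set (Finset α)).Pairwise Disjoint

/-- The induced matching number `c_H = max { |⋃ M| - |M| : M induced matching }`. -/
noncomputable def cInd {α : Type*} [DecidableEq α] (Es : Set (Finset α)) : ℕ :=
  sSup {n : ℕ | ∃ M : Finset (Finset α),
    InducedMatching Es M ∧ n = (M.sup id).card - M.card}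

/-- The semi induced matching number `c'_H`. -/
noncomputable def cSemi {α : Type*} [DecidableEq α] (Es : Set (Finset α)) : ℕ :=
  sSup {n : ℕ | ∃ M : Finset (Finset α),
    SemiInducedMatching Es M ∧ n = (M.sup id).card - M.card}


/-- For any simple hypergraph `H`, `c'_H ≤ dim Δ_H + 1`: for any semi
induced matching `M = {E_1,…,E_k}` of `H` there is an independent set of `H` of
cardinality at least `|⋃ E_ℓ| - k`. -/
theorem cSemi_le_dim_add_one {α : Type*} [DecidableEq α]
    (V : Finset α) (E : Finset (Finset α))
    (hEV : ∀ e ∈ E, e ⊆ V)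
    (hne : ∀ e ∈ E, e ≠ ∅)
    (hsimple : ∀ e ∈ E, ∀ e' ∈ E, e ⊆ e' → e = e') :
    ∀ M : Finset (Finset α), SemiInducedMatching (↑E) M →
      ∃ S : Finset α, S ⊆ V ∧ (∀ e ∈ E, ¬ e ⊆ S) ∧
        (M.sup id).card - M.card ≤ S.card := by
  classical
  intro M hM
  rcases eq_or_ne M ∅ with rfl | hM0
  · refine ⟨∅, by simp, ?_, by simp⟩
    intro e he hsub
    exact hne e he (Finset.subset_empty.mp hsub)
  · obtain ⟨e0, he0⟩ := Finset.nonempty_iff_ne_empty.mpr hM0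
    have he0E : e0 ∈ E := hM.1 he0
    have he0ne : e0.Nonempty := Finset.nonempty_iff_ne_empty.mpr (hne e0 he0E)
    obtain ⟨a, _⟩ := he0ne
    set f : Finset α → α := fun e => if h : e.Nonempty then h.choose else a with hf
    set S : Finset α := (M.sup id) \ M.image f with hS
    have hsupV : M.sup id ⊆ V := by
      intro x hx
      obtain ⟨e, heM, hxe⟩ := Finset.mem_sup.mp hx
      exact hEV e (hM.1 heM) hxe
    refine ⟨S, (Finset.sdiff_subset).trans hsupV, ?_, ?_⟩
    · intro e heE hsub
      have heM : e ∈ M := hM.2 e (by exact_mod_cast heE)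
        (hsub.trans Finset.sdiff_subset)
      have hene : e.Nonempty := Finset.nonempty_iff_ne_empty.mpr (hne e heE)
      have hfe : f e ∈ e := by simp only [hf, dif_pos hene]; exact hene.choose_spec
      have : f e ∈ S := hsub hfe
      exact (Finset.mem_sdiff.mp this).2 (Finset.mem_image_of_mem f heM)
    · have hsub : M.sup id ⊆ S ∪ M.image f := by
        intro x hx
        by_cases hxi : x ∈ M.image f
        · exact Finset.mem_union_right _ hxi
        · exact Finset.mem_union_left _ (Finset.mem_sdiff.mpr ⟨hx, hxi⟩)
      calc (M.sup id).card - M.card ≤ (S ∪ M.image f).card - M.card :=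
            Nat.sub_le_sub_right (Finset.card_le_card hsub) _
        _ ≤ (S.card + (M.image f).card) - M.card :=
            Nat.sub_le_sub_right (Finset.card_union_le _ _) _
        _ ≤ (S.card + M.card) - M.card :=
            Nat.sub_le_sub_right (Nat.add_le_add_left (Finset.card_image_le) _) _
        _ = S.card := by omega
end

section
/- For any simple hypergraph H, c_H ≤ dim(Δ_H) + 1: for every induced matching {E_1,…,E_k} (pairwise disjoint edges such that the only edges contained in their union are E_1,…,E_k), there is an independent set of size at least |⋃E_ℓ| − k. -/
/-- For any simple hypergraph `H`, `c_H ≤ dim Δ_H + 1`: for every induced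
matching `M = {E_1,…,E_k}` of `H` there is an independent set of `H` of cardinality
at least `|⋃ E_ℓ| - k`. -/
theorem cInd_le_dim_add_one {α : Type*} [DecidableEq α]
    (V : Finset α) (E : Finset (Finset α))
    (hEV : ∀ e ∈ E, e ⊆ V)
    (hne : ∀ e ∈ E, e ≠ ∅)
    (hsimple : ∀ e ∈ E, ∀ e' ∈ E, e ⊆ e' → e = e') :
    ∀ M : Finset (Finset α), InducedMatching (↑E) M →
      ∃ S : Finset α, S ⊆ V ∧ (∀ e ∈ E, ¬ e ⊆ S) ∧
        (M.sup id).card - M.card ≤ S.card := by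
  classical
  intro M hIM
  obtain ⟨hM, -⟩ := hIM
  set T : Finset α := M.biUnion (fun e => if h : e.Nonempty then {h.choose} else ∅) with hT
  have hME : ∀ e ∈ M, e ∈ E := fun e he => hM.1 he
  refine ⟨M.sup id \ T, ?_, ?_, ?_⟩
  · intro x hx
    rw [Finset.mem_sdiff, Finset.mem_sup] at hx
    obtain ⟨⟨e, he, hxe⟩, -⟩ := hx
    exact hEV e (hME e he) hxe
  · intro e heE hsub
    have hsup : e ⊆ M.sup id := hsub.trans (Finset.sdiff_subset)
    have heM : e ∈ M := hM.2 e heE hsup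
    have hene : e.Nonempty := Finset.nonempty_iff_ne_empty.mpr (hne e heE)
    have hcT : hene.choose ∈ T := by
      rw [hT, Finset.mem_biUnion]
      exact ⟨e, heM, by simp [hene]⟩
    have := hsub hene.choose_spec
    rw [Finset.mem_sdiff] at this
    exact this.2 hcT
  · have hTcard : T.card ≤ M.card := by
      refine (Finset.card_biUnion_le).trans ?_
      calc ∑ e ∈ M, (if h : e.Nonempty then ({h.choose} : Finset α) else ∅).card
          ≤ ∑ e ∈ M, 1 := Finset.sum_le_sum (fun e _ => by split <;> simp)
        _ = M.card := by simp
    have hTsub : T ⊆ M.sup id := by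
      intro x hx
      rw [hT, Finset.mem_biUnion] at hx
      obtain ⟨e, he, hxe⟩ := hx
      rw [Finset.mem_sup]
      refine ⟨e, he, ?_⟩
      by_cases h : e.Nonempty
      · simp only [dif_pos h, Finset.mem_singleton] at hxe
        exact hxe ▸ h.choose_spec
      · simp [dif_neg h] at hxe
    rw [Finset.card_sdiff_of_subset hTsub]
    omega
end

section
/- Let H be a d-uniform hypergraph such that any two distinct edges E, E' with E ∩ E' ≠ ∅ satisfy |E ∩ E'| = d − 1. Then the induced matching number equals the semi induced matching number: c_H = c'_H. More precisely, for every semi induced matching {E_1,…,E_k} of H there exists a subset S ⊆ {1,…,k} such that {E_ℓ : ℓ ∈ S} is an induced matching and |⋃_{ℓ=1}^k E_ℓ| − k ≤ |⋃_{ℓ∈S} E_ℓ| − |S|. -/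
open Finset

namespace Hypergraph

variable {α : Type*} [DecidableEq α]

lemma card_sup_insert_le {T : Finset (Finset α)} {e f : Finset α} (hf : f ∈ T)
    (hef : (e \ f).card ≤ 1) : ((insert e T).sup id).card ≤ (T.sup id).card + 1 := by
  have hsub : e \ T.sup id ⊆ e \ f := sdiff_subset_sdiff subset_rfl (le_sup (f := id) hf)
  have hunion := card_sdiff_add_card e (T.sup id)
  rw [sup_insert, id, sup_eq_union]
  have := card_le_card hsub
  omega

/-- A largest `C` obeying the bound is the whole component of `e₀`: adding an edge of `M` that
meets `⋃ C` would preserve the bound. -/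
lemma exists_component_card_sup_le {M : Finset (Finset α)}
    (hsdiff : ∀ e ∈ M, ∀ f ∈ M, ¬Disjoint e f → (e \ f).card ≤ 1) {e₀ : Finset α}
    (he₀ : e₀ ∈ M) :
    ∃ C ⊆ M, e₀ ∈ C ∧ (C.sup id).card + 1 ≤ e₀.card + C.card ∧
      ∀ e ∈ M \ C, Disjoint e (C.sup id) := by
  set F := M.powerset.filter fun T => e₀ ∈ T ∧ (T.sup id).card + 1 ≤ e₀.card + T.card
  have hsingleton : {e₀} ∈ F := by simp [F, he₀]
  obtain ⟨C, hCF, hCmax⟩ := F.exists_max_image card ⟨_, hsingleton⟩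
  simp only [F, mem_filter, mem_powerset] at hCF
  obtain ⟨hCM, he₀C, hCcard⟩ := hCF
  refine ⟨C, hCM, he₀C, hCcard, fun e he => ?_⟩
  obtain ⟨heM, heC⟩ := mem_sdiff.mp he
  by_contra hmeet
  obtain ⟨f, hfC, hef⟩ : ∃ f ∈ C, ¬Disjoint e f := by
    simpa [Finset.disjoint_sup_right] using hmeet
  have hgrow := card_sup_insert_le hfC (hsdiff e heM f (hCM hfC) hef)
  have hinsert : insert e C ∈ F := by
    simp only [F, mem_filter, mem_powerset, card_insert_of_notMem heC]
    exact ⟨insert_subset heM hCM, mem_insert_of_mem he₀C, by omega⟩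
  have := hCmax _ hinsert
  rw [card_insert_of_notMem heC] at this
  omega

theorem exists_pairwiseDisjoint_subfamily (M : Finset (Finset α))
    (hanti : IsAntichain (· ⊆ ·) (M : Set (Finset α)))
    (hsdiff : ∀ e ∈ M, ∀ f ∈ M, ¬Disjoint e f → (e \ f).card ≤ 1) :
    ∃ S ⊆ M, (S : Set (Finset α)).Pairwise Disjoint ∧ (∀ e ∈ M, e ⊆ S.sup id → e ∈ S) ∧
      (M.sup id).card + S.card ≤ (S.sup id).card + M.card := by
  induction M using Finset.strongInduction with
  | _ M ih =>
  obtain rfl | ⟨e₀, he₀⟩ := M.eq_empty_or_nonempty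
  · exact ⟨∅, subset_rfl, by simp, by simp, by simp⟩
  obtain ⟨C, hCM, he₀C, hCcard, hsep⟩ := exists_component_card_sup_le hsdiff he₀
  obtain ⟨S, hSsub, hSdisj, hSind, hScard⟩ :=
    ih (M \ C) (sdiff_ssubset hCM ⟨e₀, he₀C⟩) (hanti.subset (by simp))
      fun e he f hf => hsdiff e (sdiff_subset he) f (sdiff_subset hf)
  have hCS : Disjoint (C.sup id) (S.sup id) :=
    Finset.disjoint_sup_right.mpr fun s hs => (hsep s (hSsub hs)).symm
  have he₀S : Disjoint e₀ (S.sup id) := hCS.mono_left (le_sup (f := id) he₀C)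
  have he₀_notMem : e₀ ∉ S := fun h => (mem_sdiff.mp (hSsub h)).2 he₀C
  refine ⟨insert e₀ S, insert_subset he₀ (hSsub.trans sdiff_subset), ?_, ?_, ?_⟩
  · rw [coe_insert]
    exact hSdisj.insert_of_symm fun s hs _ => Finset.disjoint_sup_right.mp he₀S hs
  · intro e heM he
    rw [sup_insert, id, sup_eq_union] at he
    by_cases heC : e ∈ C
    · have hee₀ : e ⊆ e₀ :=
        Disjoint.left_le_of_le_sup_right he (hCS.mono_left (le_sup (f := id) heC))
      rw [hanti.eq heM he₀ hee₀]
      exact mem_insert_self _ _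
    · have heS : e ⊆ S.sup id := Disjoint.left_le_of_le_sup_left he
        ((hsep e (mem_sdiff.mpr ⟨heM, heC⟩)).mono_right (le_sup (f := id) he₀C))
      exact mem_insert_of_mem (hSind e (mem_sdiff.mpr ⟨heM, heC⟩) heS)
  · have hMsup : (M.sup id).card ≤ (C.sup id).card + ((M \ C).sup id).card := by
      rw [← union_sdiff_of_subset hCM, sup_union, union_sdiff_of_subset hCM]
      exact card_union_le _ _
    have hMcard := card_sdiff_add_card_eq_card hCM
    rw [sup_insert, id, sup_eq_union, card_union_of_disjoint he₀S,
      card_insert_of_notMem he₀_notMem]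
    omega

end Hypergraph

section

variable {α : Type*} [DecidableEq α]

lemma SemiInducedMatching.inducedMatching_of_subset {Es : Set (Finset α)}
    {M S : Finset (Finset α)} (hM : SemiInducedMatching Es M) (hSM : S ⊆ M)
    (hdisj : (S : Set (Finset α)).Pairwise Disjoint) (hind : ∀ e ∈ M, e ⊆ S.sup id → e ∈ S) :
    InducedMatching Es S :=
  ⟨⟨fun _ he => hM.1 (hSM he),
    fun e he hsub => hind e (hM.2 e he (hsub.trans (sup_mono hSM))) hsub⟩, hdisj⟩

lemma bddAbove_semiInducedMatching_excess {Es : Set (Finset α)} (hEs : Es.Finite) :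
    BddAbove {n : ℕ | ∃ M : Finset (Finset α),
      SemiInducedMatching Es M ∧ n = (M.sup id).card - M.card} := by
  refine ⟨(hEs.toFinset.sup id).card, ?_⟩
  rintro _ ⟨M, hM, rfl⟩
  have hsub : M ⊆ hEs.toFinset := fun e he => hEs.mem_toFinset.mpr (hM.1 he)
  have := card_le_card (sup_mono (f := id) hsub)
  omega

lemma cInd_eq_cSemi_of_exists_inducedMatching {Es : Set (Finset α)} (hEs : Es.Finite)
    (h : ∀ M : Finset (Finset α), SemiInducedMatching Es M → ∃ S, InducedMatching Es S ∧
      (M.sup id).card - M.card ≤ (S.sup id).card - S.card) :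
    cInd Es = cSemi Es := by
  have hbdd := bddAbove_semiInducedMatching_excess hEs
  have hsub : {n : ℕ | ∃ M : Finset (Finset α),
      InducedMatching Es M ∧ n = (M.sup id).card - M.card} ⊆
      {n : ℕ | ∃ M : Finset (Finset α),
      SemiInducedMatching Es M ∧ n = (M.sup id).card - M.card} :=
    fun _ ⟨M, hM, hn⟩ => ⟨M, hM.1, hn⟩
  refine le_antisymm (csSup_le_csSup' hbdd hsub) (csSup_le' ?_)
  rintro _ ⟨M, hM, rfl⟩
  obtain ⟨S, hS, hle⟩ := h M hM
  exact hle.trans (le_csSup (hbdd.mono hsub) ⟨S, hS, rfl⟩)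

end

theorem cInd_eq_cSemi_of_uniform_general {α : Type*} [DecidableEq α]
    (d : ℕ) (E : Finset (Finset α))
    (hsimple : ∀ e ∈ E, ∀ e' ∈ E, e ⊆ e' → e = e')
    (huniform : ∀ e ∈ E, e.card = d)
    (hint : ∀ e ∈ E, ∀ e' ∈ E, e ≠ e' → (e ∩ e').Nonempty → (e ∩ e').card = d - 1) :
    cInd (α := α) ↑E = cSemi (α := α) ↑E ∧
      ∀ M : Finset (Finset α), SemiInducedMatching (↑E) M →
        ∃ S ⊆ M, InducedMatching (↑E) S ∧
          (M.sup id).card - M.card ≤ (S.sup id).card - S.card := by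
  have hsdiff : ∀ e ∈ E, ∀ f ∈ E, ¬Disjoint e f → (e \ f).card ≤ 1 := by
    intro e he f hf hef
    obtain rfl | hne := eq_or_ne e f
    · simp
    have hinter := hint e he f hf hne (not_disjoint_iff_nonempty_inter.mp hef)
    have := card_sdiff_add_card_inter e f
    have := huniform e he
    omega
  have key : ∀ M : Finset (Finset α), SemiInducedMatching (↑E) M →
      ∃ S ⊆ M, InducedMatching (↑E) S ∧
        (M.sup id).card - M.card ≤ (S.sup id).card - S.card := by
    intro M hM
    have hME : M ⊆ E := fun e he => mem_coe.mp (hM.1 he)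
    obtain ⟨S, hSM, hdisj, hind, hcount⟩ := Hypergraph.exists_pairwiseDisjoint_subfamily M
      (fun e he f hf hne hef => hne (hsimple e (hME he) f (hME hf) hef))
      fun e he f hf => hsdiff e (hME he) f (hME hf)
    exact ⟨S, hSM, hM.inducedMatching_of_subset hSM hdisj hind, by omega⟩
  exact ⟨cInd_eq_cSemi_of_exists_inducedMatching E.finite_toSet
    fun M hM => (key M hM).imp fun _ h => h.2, key⟩

/-- If `H` is a `d`-uniform hypergraph in which any two distinct
intersecting edges meet in exactly `d - 1` vertices, then `c_H = c'_H`; more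
precisely, every semi induced matching `M` contains a subset `S` which is an
induced matching with `|⋃ M| - |M| ≤ |⋃ S| - |S|`. -/
theorem cInd_eq_cSemi_of_uniform {α : Type*} [DecidableEq α]
    (d : ℕ) (E : Finset (Finset α))
    (hne : ∀ e ∈ E, e ≠ ∅)
    (hsimple : ∀ e ∈ E, ∀ e' ∈ E, e ⊆ e' → e = e')
    (huniform : ∀ e ∈ E, e.card = d)
    (hint : ∀ e ∈ E, ∀ e' ∈ E, e ≠ e' → (e ∩ e').Nonempty → (e ∩ e').card = d - 1) :
    cInd (α := α) ↑E = cSemi (α := α) ↑E ∧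
      ∀ M : Finset (Finset α), SemiInducedMatching (↑E) M →
        ∃ S ⊆ M, InducedMatching (↑E) S ∧
          (M.sup id).card - M.card ≤ (S.sup id).card - S.card :=
  cInd_eq_cSemi_of_uniform_general d E hsimple huniform hint
end

section
/- For a finite simple graph G (viewed as a 2-uniform hypergraph), the induced matching number c_G equals the semi induced matching number c'_G. -/
lemma exists_disjoint_closed {α : Type*} [DecidableEq α] :
    ∀ n : ℕ, ∀ M : Finset (Finset α), M.card ≤ n → (∀ e ∈ M, e.card = 2) →
    ∃ M' : Finset (Finset α), M' ⊆ M ∧ (M' : Set (Finset α)).Pairwise Disjoint ∧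
      (∀ h ∈ M, h ⊆ M'.sup id → h ∈ M') ∧
      (M.sup id).card ≤ M.card + M'.card := by
  intro n
  induction n with
  | zero =>
    intro M hM _
    have : M = ∅ := Finset.card_eq_zero.mp (Nat.le_zero.mp hM)
    subst this
    exact ⟨∅, by simp, by simp, by simp, by simp⟩
  | succ n ih =>
    intro M hMn hcard
    by_cases hd : (M : Set (Finset α)).Pairwise Disjoint
    · refine ⟨M, subset_rfl, hd, fun h hh _ => hh, ?_⟩
      have h1 : M.sup id = M.biUnion id := Finset.sup_eq_biUnion M id
      have h2 : (M.biUnion id).card ≤ ∑ e ∈ M, (id e).card := Finset.card_biUnion_le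
      have h3 : ∑ e ∈ M, (id e).card = ∑ _e ∈ M, 2 :=
        Finset.sum_congr rfl (fun e he => hcard e he)
      have h4 : ∑ _e ∈ M, (2 : ℕ) = M.card * 2 := by
        rw [Finset.sum_const, smul_eq_mul]
      rw [h1]
      omega
    · simp only [Set.Pairwise] at hd
      push_neg at hd
      obtain ⟨e, he, f, hf, hef, hnd⟩ := hd
      rw [Finset.mem_coe] at he hf
      have heM : e ∈ M.erase f := Finset.mem_erase.mpr ⟨hef, he⟩
      have heS : e ⊆ (M.erase f).sup id := Finset.le_sup (f := id) heM
      obtain ⟨v, hve, hvf⟩ := Finset.not_disjoint_iff.mp hnd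
      have hvS : v ∈ (M.erase f).sup id := heS hve
      have hfM : f ∉ M.erase f := Finset.notMem_erase f M
      have hMins : M = insert f (M.erase f) := (Finset.insert_erase hf).symm
      have hMsup : M.sup id = f ⊔ (M.erase f).sup id := by
        conv_lhs => rw [hMins]
        rw [Finset.sup_insert]
        rfl
      have hfcard : 1 ≤ M.card := Finset.card_pos.mpr ⟨f, hf⟩
      have hMcard : M.card = (M.erase f).card + 1 := by
        rw [Finset.card_erase_of_mem hf]; omega
      obtain ⟨M', hM'sub, hM'disj, hM'closed, hM'card⟩ :=
        ih (M.erase f) (by omega) (fun x hx => hcard x (Finset.mem_of_mem_erase hx))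
      have hM'subM : M' ⊆ M := hM'sub.trans (Finset.erase_subset f M)
      by_cases hfS : f ⊆ (M.erase f).sup id
      · have hsupeq : M.sup id = (M.erase f).sup id := by
          rw [hMsup]; exact sup_eq_right.mpr (Finset.le_iff_subset.mpr hfS)
        by_cases hfM' : f ⊆ M'.sup id
        · -- fixup: f spans two distinct edges of M'
          obtain ⟨a, b, hab, hfab⟩ := Finset.card_eq_two.mp (hcard f hf)
          have haf : a ∈ f := by rw [hfab]; simp
          have hbf : b ∈ f := by rw [hfab]; simp
          obtain ⟨g₁, hg₁, hag₁⟩ := Finset.mem_sup.mp (hfM' haf)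
          obtain ⟨g₂, hg₂, hbg₂⟩ := Finset.mem_sup.mp (hfM' hbf)
          have hfnotM' : f ∉ M' := fun h => hfM (hM'sub h)
          have hg₁M : g₁ ∈ M := hM'subM hg₁
          have hg₂M : g₂ ∈ M := hM'subM hg₂
          have hg12 : g₁ ≠ g₂ := by
            rintro rfl
            have hsub : f ⊆ g₁ := by
              intro x hx
              rw [hfab] at hx
              rcases Finset.mem_insert.mp hx with h | h
              · exact h ▸ hag₁
              · exact (Finset.mem_singleton.mp h) ▸ hbg₂
            have : f = g₁ := Finset.eq_of_subset_of_card_le hsub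
              (by rw [hcard f hf, hcard g₁ hg₁M])
            exact hfnotM' (this ▸ hg₁)
          have hdisj12 : Disjoint g₁ g₂ := hM'disj hg₁ hg₂ hg12
          have hRsub : (M'.erase g₁).erase g₂ ⊆ M' :=
            (Finset.erase_subset _ _).trans (Finset.erase_subset _ _)
          have hfR : f ∉ (M'.erase g₁).erase g₂ := fun h => hfnotM' (hRsub h)
          have hg₂inerase : g₂ ∈ M'.erase g₁ := Finset.mem_erase.mpr ⟨hg12.symm, hg₂⟩
          have h2M' : 2 ≤ M'.card := Finset.one_lt_card.mpr ⟨g₁, hg₁, g₂, hg₂, hg12⟩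
          have hRcard : ((M'.erase g₁).erase g₂).card + 2 = M'.card := by
            rw [Finset.card_erase_of_mem hg₂inerase, Finset.card_erase_of_mem hg₁]
            have h1 : 1 ≤ (M'.erase g₁).card :=
              Finset.card_pos.mpr ⟨g₂, hg₂inerase⟩
            have := Finset.card_erase_of_mem hg₁
            omega
          have hM''card : (insert f ((M'.erase g₁).erase g₂)).card
              = ((M'.erase g₁).erase g₂).card + 1 := Finset.card_insert_of_notMem hfR
          have hfRdisj : ∀ h ∈ (M'.erase g₁).erase g₂, Disjoint f h := by
            intro h hhR
            have hhM' : h ∈ M' := hRsub hhR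
            have hh1 : h ≠ g₁ := (Finset.mem_erase.mp (Finset.mem_erase.mp hhR).2).1
            have hh2 : h ≠ g₂ := (Finset.mem_erase.mp hhR).1
            have hd1 : Disjoint g₁ h := hM'disj hg₁ hhM' (Ne.symm hh1)
            have hd2 : Disjoint g₂ h := hM'disj hg₂ hhM' (Ne.symm hh2)
            rw [Finset.disjoint_left]
            intro x hxf
            rw [hfab] at hxf
            rcases Finset.mem_insert.mp hxf with h' | h'
            · rw [h']; exact Finset.disjoint_left.mp hd1 hag₁
            · rw [Finset.mem_singleton.mp h']; exact Finset.disjoint_left.mp hd2 hbg₂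
          have hM''disj : ((insert f ((M'.erase g₁).erase g₂) : Finset (Finset α)) :
              Set (Finset α)).Pairwise Disjoint := by
            intro x hx y hy hxy
            rw [Finset.coe_insert, Set.mem_insert_iff] at hx hy
            rcases hx with rfl | hx
            · rcases hy with rfl | hy
              · exact absurd rfl hxy
              · exact hfRdisj y hy
            · rcases hy with rfl | hy
              · exact (hfRdisj x hx).symm
              · exact hM'disj (hRsub hx) (hRsub hy) hxy
          have hM''supsub : (insert f ((M'.erase g₁).erase g₂)).sup id ≤ M'.sup id := by
            apply Finset.sup_le
            intro x hx
            rcases Finset.mem_insert.mp hx with h' | hx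
            · rw [h']; exact Finset.le_iff_subset.mpr hfM'
            · exact Finset.le_sup (f := id) (hRsub hx)
          refine ⟨insert f ((M'.erase g₁).erase g₂), ?_, hM''disj, ?_, ?_⟩
          · intro x hx
            rcases Finset.mem_insert.mp hx with h' | hx
            · rw [h']; exact hf
            · exact hM'subM (hRsub hx)
          · intro h hhM hhsup
            by_cases hhf : h = f
            · rw [hhf]; exact Finset.mem_insert_self _ _
            · have hhM' : h ∈ M' := hM'closed h (Finset.mem_erase.mpr ⟨hhf, hhM⟩)
                (hhsup.trans (Finset.le_iff_subset.mp hM''supsub))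
              by_cases hh1 : h = g₁
              · exfalso
                obtain ⟨c, hcg₁, hca⟩ := Finset.exists_mem_ne
                  (by rw [hcard g₁ hg₁M]; norm_num) a
                have hcsup : c ∈ (insert f ((M'.erase g₁).erase g₂)).sup id :=
                  hhsup (hh1 ▸ hcg₁)
                obtain ⟨x, hxM'', hcx⟩ := Finset.mem_sup.mp hcsup
                rcases Finset.mem_insert.mp hxM'' with h' | hxR
                · rw [h', hfab] at hcx
                  rcases Finset.mem_insert.mp hcx with h'' | h''
                  · exact hca h''
                  · have hcg₂ : c ∈ g₂ := (Finset.mem_singleton.mp h'') ▸ hbg₂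
                    exact Finset.disjoint_left.mp hdisj12 hcg₁ hcg₂
                · have hx1 : x ≠ g₁ := (Finset.mem_erase.mp (Finset.mem_erase.mp hxR).2).1
                  have : Disjoint g₁ x := hM'disj hg₁ (hRsub hxR) (Ne.symm hx1)
                  exact Finset.disjoint_left.mp this hcg₁ hcx
              · by_cases hh2 : h = g₂
                · exfalso
                  obtain ⟨c, hcg₂, hcb⟩ := Finset.exists_mem_ne
                    (by rw [hcard g₂ hg₂M]; norm_num) b
                  have hcsup : c ∈ (insert f ((M'.erase g₁).erase g₂)).sup id :=
                    hhsup (hh2 ▸ hcg₂)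
                  obtain ⟨x, hxM'', hcx⟩ := Finset.mem_sup.mp hcsup
                  rcases Finset.mem_insert.mp hxM'' with h' | hxR
                  · rw [h', hfab] at hcx
                    rcases Finset.mem_insert.mp hcx with h'' | h''
                    · have hcg₁ : c ∈ g₁ := h'' ▸ hag₁
                      exact Finset.disjoint_left.mp hdisj12 hcg₁ hcg₂
                    · exact hcb (Finset.mem_singleton.mp h'')
                  · have hx2 : x ≠ g₂ := (Finset.mem_erase.mp hxR).1
                    have : Disjoint g₂ x := hM'disj hg₂ (hRsub hxR) (Ne.symm hx2)
                    exact Finset.disjoint_left.mp this hcg₂ hcx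
                · exact Finset.mem_insert_of_mem
                    (Finset.mem_erase.mpr ⟨hh2, Finset.mem_erase.mpr ⟨hh1, hhM'⟩⟩)
          · rw [hsupeq]
            omega
        · refine ⟨M', hM'subM, hM'disj, ?_, ?_⟩
          · intro h hhM hhsup
            by_cases hhf : h = f
            · exact absurd (hhf ▸ hhsup) hfM'
            · exact hM'closed h (Finset.mem_erase.mpr ⟨hhf, hhM⟩) hhsup
          · rw [hsupeq]; omega
      · refine ⟨M', hM'subM, hM'disj, ?_, ?_⟩
        · intro h hhM hhsup
          by_cases hhf : h = f
          · exfalso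
            apply hfS
            have h5 : h ⊆ (M.erase f).sup id :=
              hhsup.trans (Finset.le_iff_subset.mp (Finset.sup_mono hM'sub))
            rwa [hhf] at h5
          · exact hM'closed h (Finset.mem_erase.mpr ⟨hhf, hhM⟩) hhsup
        · have hcup : M.sup id = f ∪ (M.erase f).sup id := by
            rw [hMsup, Finset.sup_eq_union]
          have h1 : (f \ (M.erase f).sup id).card + ((M.erase f).sup id).card
              = (f ∪ (M.erase f).sup id).card := Finset.card_sdiff_add_card f _
          have h2 : (f ∩ (M.erase f).sup id).card + (f \ (M.erase f).sup id).card
              = f.card := Finset.card_inter_add_card_sdiff f _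
          have h3 : 1 ≤ (f ∩ (M.erase f).sup id).card :=
            Finset.card_pos.mpr ⟨v, Finset.mem_inter.mpr ⟨hvf, hvS⟩⟩
          have h4 := hcard f hf
          rw [hcup]
          omega

/-- For a finite simple graph `G` (a 2-uniform simple hypergraph), the
induced matching number equals the semi induced matching number: `c_G = c'_G`. -/
theorem cInd_eq_cSemi_of_graph {α : Type*} [DecidableEq α]
    (E : Finset (Finset α))
    (hcard : ∀ e ∈ E, e.card = 2) :
    cInd (α := α) ↑E = cSemi (α := α) ↑E := by
  set semiSet := {n : ℕ | ∃ M : Finset (Finset α),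
    SemiInducedMatching (↑E) M ∧ n = (M.sup id).card - M.card} with hsemiSet
  set indSet := {n : ℕ | ∃ M : Finset (Finset α),
    InducedMatching (↑E) M ∧ n = (M.sup id).card - M.card} with hindSet
  have hbdd : BddAbove semiSet := by
    refine ⟨(E.sup id).card, ?_⟩
    rintro n ⟨M, ⟨hsub, _⟩, rfl⟩
    have hME : M ⊆ E := fun x hx => hsub hx
    have := Finset.card_le_card (Finset.le_iff_subset.mp (Finset.sup_mono hME : M.sup id ≤ E.sup id))
    omega
  have hsubset : indSet ⊆ semiSet := by
    rintro n ⟨M, hM, h⟩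
    exact ⟨M, hM.1, h⟩
  have hbdd' : BddAbove indSet := hbdd.mono hsubset
  have hindne : indSet.Nonempty := by
    refine ⟨0, ∅, ⟨⟨by simp, ?_⟩, by simp⟩, by simp⟩
    intro e heE hesub
    rw [Finset.mem_coe] at heE
    exfalso
    have h1 : e = ∅ := Finset.subset_empty.mp (by simpa using hesub)
    have h2 := hcard e heE
    rw [h1] at h2
    simp at h2
  apply le_antisymm
  · exact csSup_le_csSup hbdd hindne hsubset
  · refine csSup_le (hindne.mono hsubset) ?_
    rintro n ⟨M, ⟨hsub, hclosed⟩, rfl⟩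
    have hME : M ⊆ E := fun x hx => Finset.mem_coe.mp (hsub hx)
    obtain ⟨M', hsub', hdisj, hclosed', hcount⟩ :=
      exists_disjoint_closed M.card M le_rfl (fun x hx => hcard x (hME hx))
    have hM'E : M' ⊆ E := hsub'.trans hME
    have hind : InducedMatching (↑E) M' := by
      refine ⟨⟨fun x hx => Finset.mem_coe.mpr (hM'E (Finset.mem_coe.mp hx)), ?_⟩, hdisj⟩
      intro x hxE hxsup
      exact hclosed' x
        (hclosed x hxE (hxsup.trans (Finset.le_iff_subset.mp (Finset.sup_mono hsub'))))
        hxsup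
    have hval : (M'.sup id).card = 2 * M'.card := by
      have hdisj2 : ∀ x ∈ M', ∀ y ∈ M', x ≠ y → Disjoint (id x) (id y) :=
        fun x hx y hy hxy => hdisj (Finset.mem_coe.mpr hx) (Finset.mem_coe.mpr hy) hxy
      rw [Finset.sup_eq_biUnion, Finset.card_biUnion hdisj2]
      have h1 : ∑ e ∈ M', (id e).card = ∑ _e ∈ M', 2 :=
        Finset.sum_congr rfl (fun e he => hcard e (hM'E he))
      rw [h1, Finset.sum_const, smul_eq_mul]
      ring
    have hmem : (M'.sup id).card - M'.card ∈ indSet := ⟨M', hind, rfl⟩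
    have hle : (M.sup id).card - M.card ≤ (M'.sup id).card - M'.card := by omega
    exact hle.trans (le_csSup hbdd' hmem)
end

section
/- Let H be a d-uniform hypergraph such that any two distinct edges with nonempty intersection meet in exactly d − 1 vertices. Then every maximal matching of H is a 2-collage for H. -/
/-- Let `H` be a `d`-uniform simple hypergraph such that any two distinct
edges with nonempty intersection meet in exactly `d - 1` vertices. Then every maximal
matching of `H` is a 2-collage: for every edge `e` of `H` there is a vertex `v ∈ e`
with `e \ {v}` contained in some edge of the matching. -/
theorem maximal_matching_is_two_collage {α : Type*} [DecidableEq α]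
    (d : ℕ) (E : Finset (Finset α))
    (hne : ∀ e ∈ E, e ≠ ∅)
    (hsimple : ∀ e ∈ E, ∀ e' ∈ E, e ⊆ e' → e = e')
    (huniform : ∀ e ∈ E, e.card = d)
    (hint : ∀ e ∈ E, ∀ e' ∈ E, e ≠ e' → (e ∩ e').Nonempty → (e ∩ e').card = d - 1)
    (M : Finset (Finset α))
    (hME : M ⊆ E)
    (hdisj : (M : Set (Finset α)).Pairwise Disjoint)
    (hmax : ∀ e ∈ E, e ∉ M → ∃ f ∈ M, ¬ Disjoint e f) :
    ∀ e ∈ E, ∃ v ∈ e, ∃ f ∈ M, e.erase v ⊆ f := by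
  intro e heE
  by_cases heM : e ∈ M
  · obtain ⟨v, hv⟩ := Finset.nonempty_iff_ne_empty.2 (hne e heE)
    exact ⟨v, hv, e, heM, Finset.erase_subset _ _⟩
  · obtain ⟨f, hfM, hfd⟩ := hmax e heE heM
    have hfE : f ∈ E := hME hfM
    have hef : e ≠ f := fun h => heM (h ▸ hfM)
    have hnonempty : (e ∩ f).Nonempty := by
      rwa [Finset.not_disjoint_iff_nonempty_inter] at hfd
    have hcard : (e ∩ f).card = d - 1 := hint e heE f hfE hef hnonempty
    have hde : e.card = d := huniform e heE
    have hd1 : 1 ≤ d := by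
      rcases Finset.nonempty_iff_ne_empty.2 (hne e heE) with ⟨x, hx⟩
      have := Finset.card_pos.2 ⟨x, hx⟩
      omega
    have hsdiff : (e \ f).card = 1 := by
      have := Finset.card_inter_add_card_sdiff e f
      omega
    obtain ⟨v, hveq⟩ := Finset.card_eq_one.1 hsdiff
    have hve : v ∈ e := by
      have : v ∈ e \ f := hveq ▸ Finset.mem_singleton_self v
      exact (Finset.mem_sdiff.1 this).1
    refine ⟨v, hve, f, hfM, fun x hx => ?_⟩
    obtain ⟨hxv, hxe⟩ := Finset.mem_erase.1 hx
    by_contra hxf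
    have : x ∈ e \ f := Finset.mem_sdiff.2 ⟨hxe, hxf⟩
    rw [hveq, Finset.mem_singleton] at this
    exact hxv this
end

section
/- Let H be a C_2-free hypergraph (no two distinct edges share two or more vertices), x a vertex of H, and let k be minimal such that there is a semi induced matching {E_1∖{x},…,E_k∖{x}} of H/x achieving c'_{H/x} = |⋃(E_ℓ∖{x})| − k, where each E_ℓ is an edge of H. Then {E_1,…,E_k} is a semi induced matching of H; moreover if x ∈ E_i for some i, then c'_{H/x} + 1 ≤ c'_H. -/
/-!
Erasing `x` turns `M` into an optimal semi induced matching `M'` of `H/x`. Since `H/x` is an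
antichain, a singleton `{v} ∈ M'` covers `v` alone, so dropping it keeps `M'` semi induced and
optimal; minimality of `|M|` therefore forbids singletons in `M'`. Now let `e ⊆ ⋃ M` be an edge
of `H`. Some edge `g` of `H/x` lies inside `e ∖ {x} ⊆ ⋃ M'`, so `g = m ∖ {x}` with `m ∈ M`; if
`m ≠ e` then `g ⊆ e ∩ m` is a singleton by `C_2`-freeness, which is impossible. Finally, if
`x ∈ ⋃ M` then `⋃ M` has one vertex more than `⋃ M'`, which gives `c'_{H/x} + 1 ≤ c'_H`.
-/

open Finset

section

variable {α : Type*} [DecidableEq α]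

def contraction (E : Finset (Finset α)) (x : α) : Set (Finset α) :=
  {f : Finset α | f ≠ ∅ ∧ (∃ e ∈ E, f = e.erase x) ∧
    ∀ e ∈ E, e.erase x ≠ ∅ → ¬ e.erase x ⊂ f}

theorem empty_notMem_contraction (E : Finset (Finset α)) (x : α) :
    ∅ ∉ contraction E x :=
  fun h => h.1 rfl

theorem contraction_isAntichain (E : Finset (Finset α)) (x : α) :
    IsAntichain (· ⊆ ·) (contraction E x) := by
  rintro f ⟨hf, ⟨e, he, rfl⟩, -⟩ g ⟨-, -, hg⟩ hfg hsub
  exact hg e he hf (ssubset_of_subset_of_ne hsub hfg)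

theorem exists_mem_contraction_subset_erase {E : Finset (Finset α)} {x : α} {e : Finset α}
    (he : e ∈ E) (hne : (e.erase x).Nonempty) :
    ∃ g ∈ contraction E x, g ⊆ e.erase x := by
  obtain ⟨g, hge, ⟨hg, e', he', rfl⟩, hmin⟩ := exists_minimal_le_of_wellFoundedLT
    (fun f : Finset α => f.Nonempty ∧ ∃ e ∈ E, f = e.erase x) _ ⟨hne, e, he, rfl⟩
  refine ⟨_, ⟨hg.ne_empty, ⟨e', he', rfl⟩, fun e'' he'' hne'' hss => ?_⟩, hge⟩
  exact hss.not_subset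
    (hmin ⟨nonempty_iff_ne_empty.mpr hne'', e'', he'', rfl⟩ hss.subset)

theorem sup_image_erase (N : Finset (Finset α)) (x : α) :
    (N.image (·.erase x)).sup id = (N.sup id).erase x := by
  ext a
  simp only [sup_image, mem_sup, Function.comp_apply, id_eq, mem_erase]
  grind

theorem semiInducedMatching_empty {K : Set (Finset α)} (hK : ∅ ∉ K) :
    SemiInducedMatching K ∅ :=
  ⟨by simp, fun e he hsub => absurd (subset_empty.mp hsub) (fun h => hK (h ▸ he))⟩

theorem sup_erase_singleton_of_isAntichain {K : Set (Finset α)} {S : Finset (Finset α)}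
    {v : α} (hK : IsAntichain (· ⊆ ·) K) (hS : ↑S ⊆ K) (hv : {v} ∈ S) :
    (S.erase {v}).sup id = (S.sup id).erase v := by
  ext a
  simp only [mem_sup, mem_erase, id_eq]
  constructor
  · rintro ⟨f, ⟨hfv, hf⟩, haf⟩
    refine ⟨?_, f, hf, haf⟩
    rintro rfl
    exact hK.eq (hS hv) (hS hf) (singleton_subset_iff.mpr haf) |>.symm |> hfv
  · rintro ⟨hav, f, hf, haf⟩
    exact ⟨f, ⟨fun h => hav (mem_singleton.mp (h ▸ haf)), hf⟩, haf⟩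

theorem SemiInducedMatching.erase_singleton {K : Set (Finset α)} {S : Finset (Finset α)}
    {v : α} (hK : IsAntichain (· ⊆ ·) K) (hS : SemiInducedMatching K S) (hv : {v} ∈ S) :
    SemiInducedMatching K (S.erase {v}) := by
  refine ⟨fun f hf => hS.1 (mem_of_mem_erase hf), fun g hg hsub => ?_⟩
  rw [sup_erase_singleton_of_isAntichain hK hS.1 hv] at hsub
  refine mem_erase.mpr ⟨?_, hS.2 g hg (hsub.trans (erase_subset _ _))⟩
  rintro rfl
  simpa using hsub (mem_singleton_self v)

theorem card_sup_erase_singleton_sub_card {K : Set (Finset α)} {S : Finset (Finset α)}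
    {v : α} (hK : IsAntichain (· ⊆ ·) K) (hS : ↑S ⊆ K) (hv : {v} ∈ S) :
    #((S.erase {v}).sup id) - #(S.erase {v}) = #(S.sup id) - #S := by
  have hvS : v ∈ S.sup id := le_sup (f := id) hv (mem_singleton_self v)
  rw [sup_erase_singleton_of_isAntichain hK hS hv, card_erase_of_mem hvS, card_erase_of_mem hv]
  have := card_pos.mpr ⟨v, hvS⟩
  have := card_pos.mpr ⟨_, hv⟩
  omega

def IsOptimalOnContraction (E : Finset (Finset α)) (x : α) (N : Finset (Finset α)) : Prop :=
  N ⊆ E ∧ #(N.image (·.erase x)) = #N ∧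
    SemiInducedMatching (contraction E x) (N.image (·.erase x)) ∧
    cSemi (contraction E x) = #((N.image (·.erase x)).sup id) - #(N.image (·.erase x))

theorem isOptimalOnContraction_empty {E : Finset (Finset α)} {x : α}
    (h : cSemi (contraction E x) = 0) : IsOptimalOnContraction E x ∅ :=
  ⟨empty_subset E, rfl, semiInducedMatching_empty (empty_notMem_contraction E x), by simpa⟩

theorem IsOptimalOnContraction.erase {E M : Finset (Finset α)} {x v : α} {m : Finset α}
    (hM : IsOptimalOnContraction E x M) (hm : m ∈ M) (hmv : m.erase x = {v}) :
    IsOptimalOnContraction E x (M.erase m) := by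
  obtain ⟨hME, hinj, hsemi, hval⟩ := hM
  have hv : {v} ∈ M.image (·.erase x) := mem_image.mpr ⟨m, hm, hmv⟩
  have himage : (M.erase m).image (·.erase x) = (M.image (·.erase x)).erase {v} := by
    rw [← sdiff_singleton_eq_erase, image_sdiff_of_injOn (card_image_iff.mp hinj)
      (singleton_subset_iff.mpr hm), image_singleton, hmv, sdiff_singleton_eq_erase]
  refine ⟨(erase_subset m M).trans hME, ?_, ?_, ?_⟩ <;> rw [himage]
  · rw [card_erase_of_mem hv, hinj, card_erase_of_mem hm]
  · exact hsemi.erase_singleton (contraction_isAntichain E x) hv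
  · rw [card_sup_erase_singleton_sub_card (contraction_isAntichain E x) hsemi.1 hv, hval]

theorem IsOptimalOnContraction.singleton_notMem_image {E M : Finset (Finset α)} {x : α}
    (hM : IsOptimalOnContraction E x M) (hmin : ∀ N, IsOptimalOnContraction E x N → #M ≤ #N)
    (v : α) : {v} ∉ M.image (·.erase x) := by
  intro hv
  obtain ⟨m, hm, hmv⟩ := mem_image.mp hv
  have hsmaller := hmin _ (hM.erase hm hmv)
  rw [card_erase_of_mem hm] at hsmaller
  have := card_pos.mpr ⟨m, hm⟩
  omega

-- `c'_{H/x}` is a truncated difference: were `|M| > |⋃ M'|`, the empty matching would be optimal too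
theorem IsOptimalOnContraction.card_le_card_sup_image {E M : Finset (Finset α)} {x : α}
    (hM : IsOptimalOnContraction E x M) (hmin : ∀ N, IsOptimalOnContraction E x N → #M ≤ #N) :
    #M ≤ #((M.image (·.erase x)).sup id) := by
  by_contra! hlt
  have hzero : cSemi (contraction E x) = 0 := by
    rw [hM.2.2.2, hM.2.1]
    omega
  have := hmin ∅ (isOptimalOnContraction_empty hzero)
  rw [card_empty] at this
  omega

theorem SemiInducedMatching.le_cSemi {E M : Finset (Finset α)}
    (hM : SemiInducedMatching (↑E) M) : #(M.sup id) - #M ≤ cSemi (↑E : Set (Finset α)) := by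
  refine le_csSup ⟨#(E.sup id), ?_⟩ ⟨M, hM, rfl⟩
  rintro n ⟨N, hN, rfl⟩
  exact (Nat.sub_le _ _).trans (card_le_card (sup_mono fun f hf => hN.1 hf))

theorem semiInducedMatching_of_contraction {E M : Finset (Finset α)} {x : α}
    (hne : ∀ e ∈ E, e ≠ ∅)
    (hsimple : ∀ e ∈ E, ∀ e' ∈ E, e ⊆ e' → e = e')
    (hC2 : ∀ e ∈ E, ∀ e' ∈ E, e ≠ e' → #(e ∩ e') ≤ 1)
    (hME : M ⊆ E) (hsemi : SemiInducedMatching (contraction E x) (M.image (·.erase x)))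
    (hsingleton : ∀ v, {v} ∉ M.image (·.erase x)) :
    SemiInducedMatching (↑E) M := by
  refine ⟨fun m hm => hME hm, fun e he hsub => ?_⟩
  by_contra heM
  rcases (e.erase x).eq_empty_or_nonempty with hempty | hnonempty
  · have hex : e = {x} := ((erase_eq_empty_iff e x).mp hempty).resolve_left (hne e he)
    obtain ⟨m, hm, hxm⟩ := mem_sup.mp (hsub (hex ▸ mem_singleton_self x))
    exact heM (hsimple e he m (hME hm) (hex ▸ singleton_subset_iff.mpr hxm) ▸ hm)
  obtain ⟨g, hg, hge⟩ := exists_mem_contraction_subset_erase he hnonempty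
  have hgM : g ∈ M.image (·.erase x) := hsemi.2 g hg <| by
    rw [sup_image_erase]
    exact hge.trans (erase_subset_erase x hsub)
  obtain ⟨m, hm, rfl⟩ := mem_image.mp hgM
  have hcard : #(m.erase x) ≤ 1 :=
    (card_le_card (subset_inter (hge.trans (erase_subset x e)) (erase_subset x m))).trans
      (hC2 e he m (hME hm) fun h => heM (h ▸ hm))
  obtain ⟨v, hv⟩ := card_eq_one.mp
    (le_antisymm hcard (card_pos.mpr (nonempty_iff_ne_empty.mpr hg.1)))
  exact hsingleton v (hv ▸ hgM)

end

/-- Let `H` be a `C_2`-free simple hypergraph (any two distinct edges meet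
in at most one vertex), `x` a vertex, and let `k = |M|` be minimal such that
`{E ∖ {x} : E ∈ M}` (with `M` a set of `k` edges of `H`) is a semi induced matching of
the contraction `H/x` achieving `c'_{H/x} = |⋃ (E_ℓ ∖ {x})| - k`.  Then `M` is a semi
induced matching of `H`; moreover, if `x ∈ E_i` for some `E_i ∈ M`, then
`c'_{H/x} + 1 ≤ c'_H`. -/
theorem semiInduced_lift_of_contraction {α : Type*} [DecidableEq α]
    (E : Finset (Finset α)) (x : α)
    (hne : ∀ e ∈ E, e ≠ ∅)
    (hsimple : ∀ e ∈ E, ∀ e' ∈ E, e ⊆ e' → e = e')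
    (hC2 : ∀ e ∈ E, ∀ e' ∈ E, e ≠ e' → (e ∩ e').card ≤ 1)
    -- the edge set of the contraction H/x :
    (Ex : Set (Finset α))
    (hEx : Ex = {f : Finset α | f ≠ ∅ ∧ (∃ e ∈ E, f = e.erase x) ∧
        ∀ e ∈ E, e.erase x ≠ ∅ → ¬ e.erase x ⊂ f})
    -- M = {E_1, …, E_k} is a set of k edges of H :
    (M : Finset (Finset α)) (hME : M ⊆ E)
    (hdistinct : (M.image (fun e : Finset α => e.erase x)).card = M.card)
    -- {E_1 ∖ {x}, …, E_k ∖ {x}} is a semi induced matching of H/x realizing c'_{H/x} :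
    (hsemi : SemiInducedMatching Ex (M.image (fun e : Finset α => e.erase x)))
    (hval : cSemi Ex
      = ((M.image (fun e : Finset α => e.erase x)).sup id).card - (M.image (fun e : Finset α => e.erase x)).card)
    -- k is the smallest size of such a configuration :
    (hmin : ∀ N : Finset (Finset α), N ⊆ E →
      (N.image (fun e : Finset α => e.erase x)).card = N.card →
      SemiInducedMatching Ex (N.image (fun e : Finset α => e.erase x)) →
      cSemi Ex
        = ((N.image (fun e : Finset α => e.erase x)).sup id).card - (N.image (fun e : Finset α => e.erase x)).card →
      M.card ≤ N.card) :
    SemiInducedMatching (↑E) M ∧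
      ((∃ e ∈ M, x ∈ e) → cSemi Ex + 1 ≤ cSemi (α := α) ↑E) := by
  obtain rfl : Ex = contraction E x := hEx
  have hopt : IsOptimalOnContraction E x M := ⟨hME, hdistinct, hsemi, hval⟩
  have hmin' : ∀ N, IsOptimalOnContraction E x N → #M ≤ #N :=
    fun N ⟨hNE, hinj, hNsemi, hNval⟩ => hmin N hNE hinj hNsemi hNval
  have hlift := semiInducedMatching_of_contraction hne hsimple hC2 hME hsemi
    (hopt.singleton_notMem_image hmin')
  refine ⟨hlift, fun ⟨m, hm, hxm⟩ => ?_⟩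
  have hx : x ∈ M.sup id := mem_sup.mpr ⟨m, hm, hxm⟩
  have hcard := hopt.card_le_card_sup_image hmin'
  have hle := hlift.le_cSemi
  rw [sup_image_erase, card_erase_of_mem hx] at hcard
  rw [hval, hdistinct, sup_image_erase, card_erase_of_mem hx]
  have := card_pos.mpr ⟨x, hx⟩
  omega
end
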